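/- Let ω : [0,1] → ℝ^d be a C¹ path, let I = (i₁,…,i_k) be a word in {1,…,d}, and let 0 ≤ s ≤ t ≤ 1. Then the sum over all permutations σ ∈ S_k of Sig(ω)_{s,t}^{(σ(I))} equals ∏_{j=1}^k (ω^{i_j}(t) − ω^{i_j}(s)). -/

import Mathlib

/-!
Up to the null set where two coordinates coincide, the cube `(s, t)^k` is the disjoint union of
the `k!` simplices `{u (σ 0) < ⋯ < u (σ (k-1))}`, and relabelling the coordinates by `σ` turns
the signature term of `I ∘ σ` into the integral of `∏ j, (ω^{I j})' (u j)` over the `σ`-th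
simplex. The sum is therefore the integral of this product over the whole cube, which factorizes
by Fubini into `∏ j, ∫_s^t (ω^{I j})'`, and each factor is an increment by the fundamental
theorem of calculus.
-/

open MeasureTheory

/-- The signature term of a path `ω : ℝ → ℝ^d` over `[s,t]` indexed by the word
`I : Fin k → Fin d`, as the iterated integral over the open simplex. -/
noncomputable def sigTerm {d k : ℕ} (ω : ℝ → Fin d → ℝ) (s t : ℝ)
    (I : Fin k → Fin d) : ℝ :=
  ∫ u in {u : Fin k → ℝ | StrictMono u ∧ ∀ j, u j ∈ Set.Ioo s t},
    ∏ j, deriv (fun r => ω r (I j)) (u j)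

open Set Function

section Sorting

variable {k : ℕ} {α : Type*} [LinearOrder α]

theorem Tuple.eq_sort_of_strictMono_comp {u : Fin k → α} {σ : Equiv.Perm (Fin k)}
    (h : StrictMono (u ∘ σ)) : σ = Tuple.sort u :=
  Tuple.eq_sort_iff.2 ⟨h.monotone, fun _ _ hij heq => absurd heq (h hij).ne⟩

theorem injective_iff_exists_strictMono_comp_perm {u : Fin k → α} :
    Injective u ↔ ∃ σ : Equiv.Perm (Fin k), StrictMono (u ∘ σ) := by
  refine ⟨fun h => ⟨Tuple.sort u, ?_⟩, fun ⟨σ, h⟩ => ?_⟩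
  · exact (Tuple.monotone_sort u).strictMono_of_injective (h.comp (Tuple.sort u).injective)
  · simpa [comp_assoc] using h.injective.comp σ.symm.injective

theorem pairwise_disjoint_setOf_strictMono_comp_perm :
    Pairwise (Disjoint on fun σ : Equiv.Perm (Fin k) =>
      {u : Fin k → α | StrictMono (u ∘ σ)}) :=
  fun _ _ hne => disjoint_left.2 fun _ hσ hτ =>
    hne ((Tuple.eq_sort_of_strictMono_comp hσ).trans (Tuple.eq_sort_of_strictMono_comp hτ).symm)

end Sorting

section Measure

variable {ι : Type*} [Fintype ι]

theorem measurableSet_setOf_strictMono [Preorder ι] :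
    MeasurableSet {u : ι → ℝ | StrictMono u} := by
  simp only [StrictMono, ofPred_forall]
  exact .iInter fun a => .iInter fun b => .iInter fun _ =>
    measurableSet_lt (measurable_pi_apply a) (measurable_pi_apply b)

theorem volume_setOf_apply_eq_apply {i j : ι} (hij : i ≠ j) :
    volume {u : ι → ℝ | u i = u j} = 0 := by
  classical
  let L : (ι → ℝ) →ₗ[ℝ] ℝ :=
    LinearMap.proj (R := ℝ) (φ := fun _ : ι => ℝ) i - LinearMap.proj j
  have hL : {u : ι → ℝ | u i = u j} = LinearMap.ker L := by
    ext u; simp [L, sub_eq_zero]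
  rw [hL]
  refine Measure.addHaar_submodule _ _ fun htop => ?_
  have : L (Pi.single i 1) = 0 := by rw [← LinearMap.mem_ker, htop]; trivial
  simp [L, Pi.single_eq_of_ne hij.symm] at this

theorem volume_setOf_not_injective : volume {u : ι → ℝ | ¬ Injective u} = 0 := by
  have hsub : {u : ι → ℝ | ¬ Injective u} ⊆
      ⋃ i, ⋃ j, ⋃ (_ : i ≠ j), {u | u i = u j} := by
    intro u hu
    simp only [Injective, not_forall] at hu
    obtain ⟨i, j, hu, hij⟩ := hu
    exact mem_iUnion₂.2 ⟨i, j, mem_iUnion.2 ⟨hij, hu⟩⟩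
  exact measure_mono_null hsub <| measure_iUnion_null fun i => measure_iUnion_null fun j =>
    measure_iUnion_null fun hij => volume_setOf_apply_eq_apply hij

variable {E : Type*} [NormedAddCommGroup E] [NormedSpace ℝ E]

theorem setIntegral_comp_perm (σ : Equiv.Perm ι) (f : (ι → ℝ) → E) (S : Set (ι → ℝ)) :
    ∫ u in (· ∘ σ) ⁻¹' S, f (u ∘ σ) = ∫ v in S, f v :=
  (volume_measurePreserving_piCongrLeft (fun _ => ℝ) σ).symm.setIntegral_preimage_emb
    (MeasurableEquiv.measurableEmbedding _) f S

theorem setIntegral_univ_pi_prod_eq_prod (g : ι → ℝ → ℝ) (s : ι → Set ℝ) :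
    ∫ u in univ.pi s, ∏ j, g j (u j) = ∏ j, ∫ x in s j, g j x := by
  rw [volume_pi, Measure.restrict_pi_pi, integral_fintype_prod_eq_prod]

theorem sum_setIntegral_strictMono_comp_perm_inter {k : ℕ} {F : (Fin k → ℝ) → E}
    {C : Set (Fin k → ℝ)} (hC : MeasurableSet C) (hF : IntegrableOn F C) :
    ∑ σ : Equiv.Perm (Fin k), ∫ u in {u | StrictMono (u ∘ σ)} ∩ C, F u =
      ∫ u in C, F u := by
  have hmeas (σ : Equiv.Perm (Fin k)) :
      MeasurableSet ({u : Fin k → ℝ | StrictMono (u ∘ σ)} ∩ C) :=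
    ((measurableSet_setOf_strictMono (ι := Fin k)).preimage
      (measurable_pi_lambda _ fun j => measurable_pi_apply (σ j))).inter hC
  have hdisj : Pairwise (Disjoint on fun σ : Equiv.Perm (Fin k) =>
      {u : Fin k → ℝ | StrictMono (u ∘ σ)} ∩ C) :=
    pairwise_disjoint_setOf_strictMono_comp_perm.mono fun _ _ h =>
      h.mono inter_subset_left inter_subset_left
  have hunion : ⋃ σ : Equiv.Perm (Fin k), {u : Fin k → ℝ | StrictMono (u ∘ σ)} =
      {u | Injective u} := by
    ext u; simp [injective_iff_exists_strictMono_comp_perm]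
  rw [← integral_iUnion_fintype hmeas hdisj fun σ => hF.mono_set inter_subset_right,
    ← iUnion_inter, hunion]
  exact setIntegral_congr_set
    (inter_ae_eq_right_of_ae_eq_univ (ae_eq_univ.2 volume_setOf_not_injective))

end Measure

theorem integral_Ioo_deriv_eq_sub {f : ℝ → ℝ} (hf : ContDiff ℝ 1 f) {s t : ℝ}
    (hst : s ≤ t) :
    ∫ x in Ioo s t, deriv f x = f t - f s := by
  rw [← integral_Ioc_eq_integral_Ioo, ← intervalIntegral.integral_of_le hst]
  exact intervalIntegral.integral_deriv_eq_sub
    (fun _ _ => (hf.differentiable one_ne_zero).differentiableAt)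
    ((hf.continuous_deriv le_rfl).intervalIntegrable s t)

theorem sigTerm_comp_perm {d k : ℕ} (ω : ℝ → Fin d → ℝ) (s t : ℝ) (I : Fin k → Fin d)
    (σ : Equiv.Perm (Fin k)) :
    sigTerm ω s t (I ∘ σ) = ∫ u in {u | StrictMono (u ∘ σ)} ∩ univ.pi fun _ => Ioo s t,
      ∏ j, deriv (fun r => ω r (I j)) (u j) := by
  have hset : (· ∘ σ) ⁻¹' {v | StrictMono v ∧ ∀ j, v j ∈ Ioo s t} =
      {u | StrictMono (u ∘ σ)} ∩ univ.pi fun _ => Ioo s t := by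
    ext u
    simp only [mem_preimage, mem_ofPred_eq, comp_apply,
      σ.forall_congr_right (q := fun j => u j ∈ Ioo s t)]
    simp
  rw [sigTerm, ← setIntegral_comp_perm σ, hset]
  exact congrArg _ <| funext fun u =>
    Equiv.prod_comp σ fun j => deriv (fun r => ω r (I j)) (u j)

theorem symmetrized_signature_eq_product_general {d k : ℕ}
    (ω : ℝ → Fin d → ℝ) (hω : ContDiff ℝ 1 ω)
    (I : Fin k → Fin d) (s t : ℝ) (hst : s ≤ t) :
    ∑ σ : Equiv.Perm (Fin k), sigTerm ω s t (I ∘ σ) =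
      ∏ j, (ω t (I j) - ω s (I j)) := by
  have hcoord (i : Fin d) : ContDiff ℝ 1 (fun r => ω r i) := (contDiff_apply ℝ ℝ i).comp hω
  have hint : IntegrableOn (fun u : Fin k → ℝ => ∏ j, deriv (fun r => ω r (I j)) (u j))
      (univ.pi fun _ => Ioo s t) :=
    (continuous_finsetProd _ fun j _ => ((hcoord (I j)).continuous_deriv le_rfl).comp
      (continuous_apply j)).continuousOn.integrableOn_compact
      (isCompact_univ_pi fun _ => isCompact_Icc) |>.mono_set
      (pi_mono fun _ _ => Ioo_subset_Icc_self)
  simp_rw [sigTerm_comp_perm]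
  rw [sum_setIntegral_strictMono_comp_perm_inter (.univ_pi fun _ => measurableSet_Ioo) hint,
    setIntegral_univ_pi_prod_eq_prod]
  exact Finset.prod_congr rfl fun j _ => integral_Ioo_deriv_eq_sub (hcoord (I j)) hst

/-- Shuffle identity: the sum over all permutations `σ` of `Sig(ω)_{s,t}^{(σ(I))}`
equals the product of increments `∏_j (ω^{i_j}(t) − ω^{i_j}(s))`. -/
theorem symmetrized_signature_eq_product {d k : ℕ}
    (ω : ℝ → Fin d → ℝ) (hω : ContDiff ℝ 1 ω)
    (I : Fin k → Fin d) (s t : ℝ) (hs : 0 ≤ s) (hst : s ≤ t) (ht : t ≤ 1) :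
    ∑ σ : Equiv.Perm (Fin k), sigTerm ω s t (I ∘ σ) =
      ∏ j, (ω t (I j) - ω s (I j)) :=
  symmetrized_signature_eq_product_general ω hω I s t hst
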